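/- arXiv:1911.12827 — 2 statements merged into one kernel-verified Lean document; each statement's English description precedes it below -/
import Mathlib

section
/- Let R be a finite connected simple graph with r = |V(R)| ≥ 2 vertices and s = |E(R)| ≥ 1 edges. Let m, n ≥ 1 be integers, let x, y, c be positive reals with x ≤ n, and let h be a function assigning to each nonempty subset E of E(R) a nonnegative real number such that h(E) ≤ r! · c · (x/n)^{‖E‖} · y^{|E|}. Then Σ_φ Π_{k ∈ Ran(φ)} h(φ^{−1}(k)) ≤ (e^{r! c x m / n} − 1) · s^s · x^{r−1} · y^s · n^{1−r}, where the sum ranges over all functions φ: E(R) → {1, …, m}, Ran(φ) denotes the range of φ, and φ^{−1}(k) denotes the preimage of {k} under φ. -/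
open Finset Real

/-- `‖E‖`: the number of vertices incident to at least one edge of `E`. -/
def nodeCount {V : Type*} [Fintype V] [DecidableEq V] (E : Finset (Sym2 V)) : ℕ :=
  (Finset.univ.filter (fun v => ∃ e ∈ E, v ∈ e)).card

section aux
variable {V : Type*} [Fintype V] [DecidableEq V]

def nodeSet (E : Finset (Sym2 V)) : Finset V :=
  Finset.univ.filter (fun v => ∃ e ∈ E, v ∈ e)

lemma nodeCount_eq (E : Finset (Sym2 V)) : nodeCount E = (nodeSet E).card := rfl

lemma mem_nodeSet {E : Finset (Sym2 V)} {v : V} : v ∈ nodeSet E ↔ ∃ e ∈ E, v ∈ e := by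
  simp [nodeSet]

lemma nodeSet_union (A B : Finset (Sym2 V)) : nodeSet (A ∪ B) = nodeSet A ∪ nodeSet B := by
  ext v; simp only [mem_nodeSet, Finset.mem_union]; aesop

lemma nodeSet_nonempty {E : Finset (Sym2 V)} (h : E.Nonempty) : (nodeSet E).Nonempty := by
  obtain ⟨e, he⟩ := h
  exact ⟨(Quot.out e).1, mem_nodeSet.2 ⟨e, he, Sym2.out_fst_mem e⟩⟩

/-- crossing lemma: a walk from inside A to outside A uses an edge leaving A. -/
lemma exists_crossing_edge {G : SimpleGraph V} {a b : V} (p : G.Walk a b)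
    (A : Finset V) (ha : a ∈ A) (hb : b ∉ A) :
    ∃ u w, G.Adj u w ∧ u ∈ A ∧ w ∉ A := by
  induction p with
  | nil => exact absurd ha hb
  | @cons u c d h q ih =>
    by_cases hc : c ∈ A
    · exact ih hc hb
    · exact ⟨u, c, h, ha, hc⟩

lemma exists_mem_edge {G : SimpleGraph V} (hconn : G.Connected)
    (h2 : 2 ≤ Fintype.card V) (v : V) : ∃ w, G.Adj v w := by
  obtain ⟨u, hu⟩ := Fintype.exists_ne_of_one_lt_card (by omega) v
  obtain ⟨p⟩ := hconn v u
  obtain ⟨a, w, hadj, haA, hwA⟩ := exists_crossing_edge p {v}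
    (Finset.mem_singleton_self v) (by simp [hu])
  rw [Finset.mem_singleton] at haA
  exact ⟨w, haA ▸ hadj⟩

/-- Key connectivity lemma: parts covering the edge set of a connected graph. -/
lemma sum_nodeCount_ge {ι : Type*} [DecidableEq ι]
    (G : SimpleGraph V) [DecidableRel G.Adj]
    (hconn : G.Connected) (h2 : 2 ≤ Fintype.card V) :
    ∀ (N : ℕ) (K : Finset ι) (P : ι → Finset (Sym2 V)), K.card = N → K.Nonempty →
    (∀ k ∈ K, P k ⊆ G.edgeFinset) → (∀ k ∈ K, (P k).Nonempty) →
    (∀ e ∈ G.edgeFinset, ∃ k ∈ K, e ∈ P k) →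
    Fintype.card V + K.card ≤ (∑ k ∈ K, nodeCount (P k)) + 1 := by
  intro N
  induction N with
  | zero => intro K P hcard hK; simp [Finset.card_eq_zero.1 hcard] at hK
  | succ N ih =>
    intro K P hcard hK hsub hne hcov
    rcases Nat.lt_or_ge 1 K.card with hK2 | hK1
    · -- at least two parts
      -- first find two parts with intersecting node sets
      have hex : ∃ i ∈ K, ∃ j ∈ K, i ≠ j ∧ (nodeSet (P i) ∩ nodeSet (P j)).Nonempty := by
        by_contra hdisj
        push_neg at hdisj
        obtain ⟨i0, hi0, j0, hj0, hij0⟩ := Finset.one_lt_card.1 hK2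
        obtain ⟨a, ha⟩ := nodeSet_nonempty (hne i0 hi0)
        obtain ⟨b, hb⟩ := nodeSet_nonempty (hne j0 hj0)
        have hbA : b ∉ nodeSet (P i0) := by
          intro hbn
          have := hdisj i0 hi0 j0 hj0 hij0
          have : b ∈ (∅ : Finset V) := this ▸ Finset.mem_inter.2 ⟨hbn, hb⟩
          simp at this
        obtain ⟨p⟩ := hconn a b
        obtain ⟨u, w, hadj, huA, hwA⟩ := exists_crossing_edge p (nodeSet (P i0)) ha hbA
        have he : s(u, w) ∈ G.edgeFinset := by
          rw [SimpleGraph.mem_edgeFinset]; exact hadj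
        obtain ⟨k, hk, hek⟩ := hcov _ he
        have huk : u ∈ nodeSet (P k) := mem_nodeSet.2 ⟨_, hek, by simp⟩
        have hwk : w ∈ nodeSet (P k) := mem_nodeSet.2 ⟨_, hek, by simp⟩
        by_cases hki : k = i0
        · exact hwA (hki ▸ hwk)
        · have := hdisj i0 hi0 k hk (Ne.symm hki)
          have : u ∈ (∅ : Finset V) := this ▸ Finset.mem_inter.2 ⟨huA, huk⟩
          simp at this
      obtain ⟨i, hi, j, hj, hij, hint⟩ := hex
      -- merge part j into part i
      set K' := K.erase j with hK'
      set P' := Function.update P i (P i ∪ P j) with hP'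
      have hiK' : i ∈ K' := Finset.mem_erase.2 ⟨hij, hi⟩
      have hcard' : K'.card = N := by
        rw [hK', Finset.card_erase_of_mem hj, hcard]; omega
      have hstep := ih K' P' hcard' ⟨i, hiK'⟩
        (by
          intro k hk
          by_cases hki : k = i
          · subst hki
            rw [hP', Function.update_self]
            exact Finset.union_subset (hsub _ hi) (hsub _ hj)
          · rw [hP', Function.update_of_ne hki]
            exact hsub k (Finset.mem_of_mem_erase hk))
        (by
          intro k hk
          by_cases hki : k = i
          · subst hki
            rw [hP', Function.update_self]
            exact Finset.Nonempty.mono Finset.subset_union_left (hne _ hi)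
          · rw [hP', Function.update_of_ne hki]
            exact hne k (Finset.mem_of_mem_erase hk))
        (by
          intro e he
          obtain ⟨k, hk, hek⟩ := hcov e he
          by_cases hkj : k = j
          · refine ⟨i, hiK', ?_⟩
            rw [hP', Function.update_self]
            exact Finset.mem_union_right _ (hkj ▸ hek)
          · by_cases hki : k = i
            · refine ⟨i, hiK', ?_⟩
              rw [hP', Function.update_self]
              exact Finset.mem_union_left _ (hki ▸ hek)
            · refine ⟨k, Finset.mem_erase.2 ⟨hkj, hk⟩, ?_⟩
              rw [hP', Function.update_of_ne hki]
              exact hek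
          )
      -- now compare sums
      have hsum1 : ∑ k ∈ K, nodeCount (P k)
          = nodeCount (P i) + nodeCount (P j) + ∑ k ∈ K'.erase i, nodeCount (P k) := by
        rw [← Finset.sum_erase_add K _ hj, ← Finset.sum_erase_add K' _ hiK']
        ring
      have hsum2 : ∑ k ∈ K', nodeCount (P' k)
          = nodeCount (P i ∪ P j) + ∑ k ∈ K'.erase i, nodeCount (P k) := by
        rw [← Finset.sum_erase_add K' _ hiK', hP', Function.update_self]
        rw [add_comm]
        congr 1
        apply Finset.sum_congr rfl
        intro k hk
        rw [Function.update_of_ne (Finset.mem_erase.1 hk).1]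
      have hmerge : nodeCount (P i ∪ P j) + 1 ≤ nodeCount (P i) + nodeCount (P j) := by
        rw [nodeCount_eq, nodeCount_eq, nodeCount_eq, nodeSet_union]
        have := Finset.card_union_add_card_inter (nodeSet (P i)) (nodeSet (P j))
        have hpos : 1 ≤ (nodeSet (P i) ∩ nodeSet (P j)).card := Finset.card_pos.2 hint
        omega
      rw [hcard'] at hstep
      rw [hcard]
      omega
    · -- exactly one part
      obtain ⟨k0, hk0⟩ := hK
      have hK1' : K = {k0} := by
        apply Finset.eq_singleton_iff_unique_mem.2
        refine ⟨hk0, fun y hy => ?_⟩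
        by_contra hyk
        exact absurd (Finset.one_lt_card.2 ⟨y, hy, k0, hk0, hyk⟩) (by omega)
      subst hK1'
      have : nodeSet (P k0) = Finset.univ := by
        apply Finset.eq_univ_of_forall
        intro v
        obtain ⟨w, hw⟩ := exists_mem_edge hconn h2 v
        have he : s(v, w) ∈ G.edgeFinset := by
          rw [SimpleGraph.mem_edgeFinset]; exact hw
        obtain ⟨k, hk, hek⟩ := hcov _ he
        rw [Finset.mem_singleton] at hk
        exact mem_nodeSet.2 ⟨_, hk ▸ hek, by simp⟩
      simp [nodeCount_eq, this]

end aux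
open Finset Real


/-- Let `R` be a finite connected simple graph with `r = |V(R)| ≥ 2`
vertices and `s = |E(R)| ≥ 1` edges. Let `m, n ≥ 1` be integers, let `x, y, c` be positive
reals with `x ≤ n`, and let `h` assign to each nonempty subset `E ⊆ E(R)` a nonnegative
real with `h(E) ≤ r! · c · (x/n)^‖E‖ · y^|E|`. Then
`Σ_φ Π_{k ∈ Ran(φ)} h(φ⁻¹(k)) ≤ (e^{r!cxm/n} − 1) · s^s · x^{r−1} · y^s · n^{1−r}`,
the sum over all functions `φ : E(R) → {1, …, m}`. -/
theorem sum_over_colourings_prod_le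
    {V : Type*} [Fintype V] [DecidableEq V] (R : SimpleGraph V) [DecidableRel R.Adj]
    (hconn : R.Connected) (r s : ℕ)
    (hr : r = Fintype.card V) (hr2 : 2 ≤ r)
    (hs : s = R.edgeFinset.card) (hs1 : 1 ≤ s)
    (m n : ℕ) (hm : 1 ≤ m) (hn : 1 ≤ n)
    (x y c : ℝ) (hx : 0 < x) (hy : 0 < y) (hc : 0 < c) (hxn : x ≤ (n : ℝ))
    (h : Finset (Sym2 V) → ℝ)
    (hnonneg : ∀ E ∈ R.edgeFinset.powerset, E.Nonempty → 0 ≤ h E)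
    (hub : ∀ E ∈ R.edgeFinset.powerset, E.Nonempty →
      h E ≤ (r.factorial : ℝ) * c * (x / n) ^ (nodeCount E) * y ^ E.card) :
    ∑ φ : {e // e ∈ R.edgeFinset} → Fin m,
        ∏ k ∈ Finset.univ.image φ,
          h ((R.edgeFinset.attach.filter (fun e => φ e = k)).image Subtype.val) ≤
      (Real.exp ((r.factorial : ℝ) * c * x * m / n) - 1) * (s : ℝ) ^ s * x ^ (r - 1) *
        y ^ s * (n : ℝ) ^ (1 - (r : ℤ)) := by
  classical
  set D : ℝ := (r.factorial : ℝ) * c with hD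
  have hn0 : (0:ℝ) < n := by exact_mod_cast hn
  have hq0 : (0:ℝ) < x / n := div_pos hx hn0
  have hq1 : x / n ≤ 1 := (div_le_one hn0).2 hxn
  have hD0 : (0:ℝ) < D := mul_pos (by exact_mod_cast r.factorial_pos) hc
  set a : ℝ := D * (x / n) with ha
  have ha0 : 0 < a := mul_pos hD0 hq0
  have hES : R.edgeFinset.Nonempty := Finset.card_pos.1 (by omega)
  have hNI : Nonempty {e // e ∈ R.edgeFinset} := ⟨⟨hES.choose, hES.choose_spec⟩⟩
  have hcardES : Fintype.card {e // e ∈ R.edgeFinset} = s := by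
    rw [Fintype.card_coe, hs]
  set B : ℝ := (x/n)^(r-1) * y ^ s with hB
  have hB0 : 0 ≤ B := by positivity
  -- per-colouring bound
  have key : ∀ φ : {e // e ∈ R.edgeFinset} → Fin m,
      ∏ k ∈ Finset.univ.image φ,
          h ((R.edgeFinset.attach.filter (fun e => φ e = k)).image Subtype.val)
        ≤ a ^ (Finset.univ.image φ).card * B := by
    intro φ
    set Ek : Fin m → Finset (Sym2 V) :=
      fun k => (R.edgeFinset.attach.filter (fun e => φ e = k)).image Subtype.val with hEk
    have hsubk : ∀ k ∈ Finset.univ.image φ, Ek k ⊆ R.edgeFinset := by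
      intro k _ e he
      simp only [hEk, Finset.mem_image] at he
      obtain ⟨e', _, rfl⟩ := he
      exact e'.2
    have hnek : ∀ k ∈ Finset.univ.image φ, (Ek k).Nonempty := by
      intro k hk
      rw [Finset.mem_image] at hk
      obtain ⟨e, -, rfl⟩ := hk
      exact ⟨e.1, Finset.mem_image.2 ⟨e, Finset.mem_filter.2 ⟨Finset.mem_attach _ _, rfl⟩, rfl⟩⟩
    have hcov : ∀ e ∈ R.edgeFinset, ∃ k ∈ Finset.univ.image φ, e ∈ Ek k := by
      intro e he
      refine ⟨φ ⟨e, he⟩, Finset.mem_image_of_mem _ (Finset.mem_univ _), ?_⟩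
      exact Finset.mem_image.2 ⟨⟨e, he⟩, Finset.mem_filter.2 ⟨Finset.mem_attach _ _, rfl⟩, rfl⟩
    have himne : (Finset.univ.image φ).Nonempty :=
      hNI.elim fun e => ⟨φ e, Finset.mem_image_of_mem _ (Finset.mem_univ _)⟩
    have hnode := sum_nodeCount_ge R hconn (hr ▸ hr2) (Finset.univ.image φ).card
      (Finset.univ.image φ) Ek rfl himne hsubk hnek hcov
    have hcards : ∑ k ∈ Finset.univ.image φ, (Ek k).card = s := by
      have hc1 : ∀ k, (Ek k).card = (R.edgeFinset.attach.filter (fun e => φ e = k)).card :=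
        fun k => Finset.card_image_of_injective _ Subtype.val_injective
      rw [Finset.sum_congr rfl (fun k _ => hc1 k)]
      have hattach : R.edgeFinset.attach = (Finset.univ : Finset {e // e ∈ R.edgeFinset}) := rfl
      rw [hattach, ← Finset.card_eq_sum_card_image φ Finset.univ, Finset.card_univ, hcardES]
    calc ∏ k ∈ Finset.univ.image φ, h (Ek k)
        ≤ ∏ k ∈ Finset.univ.image φ, (D * (x/n)^(nodeCount (Ek k)) * y^((Ek k).card)) := by
          apply Finset.prod_le_prod
          · intro k hk; exact hnonneg _ (Finset.mem_powerset.2 (hsubk k hk)) (hnek k hk)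
          · intro k hk; exact hub _ (Finset.mem_powerset.2 (hsubk k hk)) (hnek k hk)
      _ = D ^ (Finset.univ.image φ).card
            * (x/n) ^ (∑ k ∈ Finset.univ.image φ, nodeCount (Ek k)) * y ^ s := by
          rw [Finset.prod_mul_distrib, Finset.prod_mul_distrib, Finset.prod_const,
            Finset.prod_pow_eq_pow_sum, Finset.prod_pow_eq_pow_sum, hcards]
      _ ≤ D ^ (Finset.univ.image φ).card
            * (x/n) ^ ((Finset.univ.image φ).card + (r-1)) * y ^ s := by
          have hle : (Finset.univ.image φ).card + (r-1)
              ≤ ∑ k ∈ Finset.univ.image φ, nodeCount (Ek k) := by omega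
          have hq := pow_le_pow_of_le_one (le_of_lt hq0) hq1 hle
          exact mul_le_mul_of_nonneg_right
            (mul_le_mul_of_nonneg_left hq (by positivity)) (by positivity)
      _ = a ^ (Finset.univ.image φ).card * B := by
          rw [ha, hB, mul_pow, pow_add]; ring
  -- group the sum over colourings by their range
  have hgroup : ∑ φ : {e // e ∈ R.edgeFinset} → Fin m, a ^ (Finset.univ.image φ).card
      ≤ (s:ℝ)^s * ((1+a)^m - 1) := by
    have hcomp := Finset.sum_comp (fun T : Finset (Fin m) => a ^ T.card)
      (fun φ : {e // e ∈ R.edgeFinset} → Fin m => Finset.univ.image φ)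
      (s := Finset.univ)
    rw [hcomp]
    set g : ({e // e ∈ R.edgeFinset} → Fin m) → Finset (Fin m) :=
      fun φ => Finset.univ.image φ with hg
    -- each fiber has size at most s^s
    have hfiber : ∀ T ∈ Finset.univ.image g,
        (Finset.univ.filter (fun φ => g φ = T)).card ≤ s^s := by
      intro T hT
      obtain ⟨φ0, -, hφ0⟩ := Finset.mem_image.1 hT
      have hTne : T.Nonempty :=
        hNI.elim fun e => ⟨φ0 e, hφ0 ▸ Finset.mem_image_of_mem _ (Finset.mem_univ _)⟩
      obtain ⟨k0, hk0⟩ := hTne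
      have hTcard : T.card ≤ s := by
        rw [← hφ0, ← hcardES, ← Finset.card_univ]
        exact Finset.card_image_le
      have hinj : (Finset.univ.filter (fun φ => g φ = T)).card
          ≤ Fintype.card ({e // e ∈ R.edgeFinset} → {k // k ∈ T}) := by
        rw [← Finset.card_univ]
        apply Finset.card_le_card_of_injOn
          (fun φ e => if hmem : φ e ∈ T then (⟨φ e, hmem⟩ : {k // k ∈ T}) else ⟨k0, hk0⟩)
          (fun _ _ => Finset.mem_univ _)
        intro φ1 h1 φ2 h2 heq
        have m1 : ∀ e, φ1 e ∈ T := fun e =>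
          (Finset.mem_filter.1 h1).2 ▸ Finset.mem_image_of_mem _ (Finset.mem_univ e)
        have m2 : ∀ e, φ2 e ∈ T := fun e =>
          (Finset.mem_filter.1 h2).2 ▸ Finset.mem_image_of_mem _ (Finset.mem_univ e)
        funext e
        have := congrFun heq e
        simp only [dif_pos (m1 e), dif_pos (m2 e)] at this
        exact congrArg Subtype.val this
      calc (Finset.univ.filter (fun φ => g φ = T)).card
          ≤ Fintype.card ({e // e ∈ R.edgeFinset} → {k // k ∈ T}) := hinj
        _ = T.card ^ s := by rw [Fintype.card_fun, Fintype.card_coe, hcardES]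
        _ ≤ s ^ s := Nat.pow_le_pow_left hTcard s
    calc ∑ T ∈ Finset.univ.image g, (Finset.univ.filter (fun φ => g φ = T)).card • a ^ T.card
        ≤ ∑ T ∈ Finset.univ.image g, (s:ℝ)^s * a ^ T.card := by
          apply Finset.sum_le_sum
          intro T hT
          rw [nsmul_eq_mul]
          apply mul_le_mul_of_nonneg_right _ (by positivity)
          calc ((Finset.univ.filter (fun φ => g φ = T)).card : ℝ)
              ≤ ((s^s : ℕ) : ℝ) := by exact_mod_cast hfiber T hT
            _ = (s:ℝ)^s := by push_cast; ring
      _ ≤ ∑ T ∈ (Finset.univ : Finset (Fin m)).powerset.filter (fun T => T.Nonempty),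
            (s:ℝ)^s * a ^ T.card := by
          apply Finset.sum_le_sum_of_subset_of_nonneg
          · intro T hT
            obtain ⟨φ0, -, hφ0⟩ := Finset.mem_image.1 hT
            refine Finset.mem_filter.2 ⟨Finset.mem_powerset.2 (Finset.subset_univ _), ?_⟩
            exact hNI.elim fun e => ⟨φ0 e, hφ0 ▸ Finset.mem_image_of_mem _ (Finset.mem_univ _)⟩
          · intro T _ _; positivity
      _ = (s:ℝ)^s * ((1+a)^m - 1) := by
          rw [← Finset.mul_sum]
          congr 1
          have hsplit := Finset.sum_filter_add_sum_filter_not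
            ((Finset.univ : Finset (Fin m)).powerset) (fun T => T.Nonempty)
            (fun T => a ^ T.card)
          have hempty : (Finset.univ : Finset (Fin m)).powerset.filter
              (fun T => ¬ T.Nonempty) = {∅} := by
            ext T
            simp [Finset.not_nonempty_iff_eq_empty]
          have hall : ∑ T ∈ (Finset.univ : Finset (Fin m)).powerset, a ^ T.card = (a+1)^m := by
            rw [Finset.powerset_univ]
            have := Finset.prod_add (fun _ : Fin m => a) (fun _ => 1) Finset.univ
            simp at this
            rw [← this]
          rw [hempty, hall] at hsplit
          simp at hsplit
          rw [Finset.powerset_univ]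
          rw [add_comm a 1] at hsplit
          linarith
  -- exponential bound
  have hExp : (1+a)^m - 1 ≤ Real.exp (D * x * m / n) - 1 := by
    have h1 : 1 + a ≤ Real.exp a := by
      have := Real.add_one_le_exp a; linarith
    have h2 : (1+a)^m ≤ (Real.exp a)^m := pow_le_pow_left₀ (by positivity) h1 m
    have h3 : (Real.exp a)^m = Real.exp (D * x * m / n) := by
      rw [← Real.exp_nat_mul]
      congr 1
      rw [ha]; ring
    linarith [h3 ▸ h2]
  have hExpPos : (0:ℝ) ≤ (1+a)^m - 1 := by
    have : (1:ℝ) ≤ (1+a)^m := one_le_pow₀ (by linarith)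
    linarith
  -- assemble
  calc ∑ φ : {e // e ∈ R.edgeFinset} → Fin m,
        ∏ k ∈ Finset.univ.image φ,
          h ((R.edgeFinset.attach.filter (fun e => φ e = k)).image Subtype.val)
      ≤ ∑ φ : {e // e ∈ R.edgeFinset} → Fin m, a ^ (Finset.univ.image φ).card * B :=
        Finset.sum_le_sum fun φ _ => key φ
    _ = (∑ φ : {e // e ∈ R.edgeFinset} → Fin m, a ^ (Finset.univ.image φ).card) * B := by
        rw [Finset.sum_mul]
    _ ≤ ((s:ℝ)^s * ((1+a)^m - 1)) * B := mul_le_mul_of_nonneg_right hgroup hB0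
    _ ≤ ((s:ℝ)^s * (Real.exp (D * x * m / n) - 1)) * B :=
        mul_le_mul_of_nonneg_right
          (mul_le_mul_of_nonneg_left hExp (by positivity)) hB0
    _ = (Real.exp (D * x * m / n) - 1) * (s : ℝ) ^ s * x ^ (r - 1) * y ^ s
          * (n : ℝ) ^ (1 - (r : ℤ)) := by
        have hz : (n : ℝ) ^ (1 - (r : ℤ)) = ((n:ℝ) ^ (r-1 : ℕ))⁻¹ := by
          have h1 : (1 - (r:ℤ)) = -((r-1 : ℕ) : ℤ) := by
            push_cast [Nat.cast_sub (by omega : 1 ≤ r)]; ring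
          rw [h1, zpow_neg, zpow_natCast]
        rw [hz, hB, div_pow, div_eq_mul_inv]
        ring
end

section
/- Let r ≥ 2 and let πₙ (n ∈ ℕ) and π be Borel probability measures on ℕ × [0,1] such that πₙ → π weakly. Assume: if r is even, (πₙ)_{r, r/2} → (π)_{r, r/2} < ∞; and if r is odd, (πₙ)_{r−1, (r−1)/2} → (π)_{r−1, (r−1)/2} < ∞ and (πₙ)_{r, (r+1)/2} → (π)_{r, (r+1)/2} < ∞. Then for every nonempty subset E of the edge set of the complete graph K_r, one has (π)_{‖E‖, |E|} < ∞ and (πₙ)_{‖E‖, |E|} → (π)_{‖E‖, |E|} as n → ∞; in particular (πₙ)_{r, r(r−1)/2} → (π)_{r, r(r−1)/2} and (πₙ)_{r, r} → (π)_{r, r}. -/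
open MeasureTheory Filter Topology Finset
open scoped ENNReal
open scoped NNReal

/-- The cross-moment `(π)_{a,b} = E[(X)_a Y^b]` for `(X,Y) ∼ π`, a Borel probability
measure on `ℕ × [0,1]`, where `(x)_a` is the falling factorial. -/
noncomputable def mom (μ : Measure (ℕ × unitInterval)) (a b : ℕ) : ℝ≥0∞ :=
  ∫⁻ p, (p.1.descFactorial a : ℝ≥0∞) * ENNReal.ofReal ((p.2 : ℝ) ^ b) ∂μ

noncomputable def yNN (p : ℕ × unitInterval) : ℝ≥0 := ⟨(p.2 : ℝ), p.2.2.1⟩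

lemma yNN_continuous : Continuous yNN :=
  Continuous.subtype_mk (continuous_subtype_val.comp continuous_snd) _

lemma yNN_le_one (p : ℕ × unitInterval) : yNN p ≤ 1 := by
  have := p.2.2.2
  exact_mod_cast this

noncomputable def momfun (a b : ℕ) (p : ℕ × unitInterval) : ℝ≥0 :=
  (p.1.descFactorial a : ℝ≥0) * yNN p ^ b

lemma momfun_continuous (a b : ℕ) : Continuous (momfun a b) := by
  apply Continuous.mul
  · exact (continuous_of_discreteTopology (α := ℕ)
      (f := fun n : ℕ => (n.descFactorial a : ℝ≥0))).comp continuous_fst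
  · exact yNN_continuous.pow b

lemma mom_eq (μ : Measure (ℕ × unitInterval)) (a b : ℕ) :
    mom μ a b = ∫⁻ p, (momfun a b p : ℝ≥0∞) ∂μ := by
  unfold mom momfun
  congr 1
  funext p
  rw [ENNReal.coe_mul, ENNReal.coe_pow, ENNReal.ofReal_pow p.2.2.1]
  have hy : (yNN p : ℝ≥0∞) = ENNReal.ofReal (p.2 : ℝ) := by
    rw [ENNReal.ofReal_eq_coe_nnreal p.2.2.1]; rfl
  rw [hy]
  norm_cast

lemma tendsto_lintegral_min (π : ℕ → ProbabilityMeasure (ℕ × unitInterval))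
    (πl : ProbabilityMeasure (ℕ × unitInterval)) (hweak : Tendsto π atTop (𝓝 πl))
    {f : ℕ × unitInterval → ℝ≥0} (hf : Continuous f) (c : ℝ≥0) :
    Tendsto (fun n => ∫⁻ p, min (f p : ℝ≥0∞) c ∂(π n).toMeasure) atTop
      (𝓝 (∫⁻ p, min (f p : ℝ≥0∞) c ∂πl.toMeasure)) := by
  have hb : ∀ x y : ℕ × unitInterval, dist (min (f x) c) (min (f y) c) ≤ (c : ℝ) := by
    intro x y
    rw [NNReal.dist_eq, abs_le]
    have h1 : (0:ℝ) ≤ (min (f x) c : ℝ≥0) := (min (f x) c).coe_nonneg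
    have h2 : ((min (f y) c : ℝ≥0) : ℝ) ≤ c := NNReal.coe_le_coe.mpr (min_le_right _ _)
    have h3 : (0:ℝ) ≤ (min (f y) c : ℝ≥0) := (min (f y) c).coe_nonneg
    have h4 : ((min (f x) c : ℝ≥0) : ℝ) ≤ c := NNReal.coe_le_coe.mpr (min_le_right _ _)
    constructor <;> linarith
  let φ : BoundedContinuousFunction (ℕ × unitInterval) ℝ≥0 :=
    ⟨⟨fun p => min (f p) c, hf.min continuous_const⟩, ⟨c, hb⟩⟩
  have h := MeasureTheory.ProbabilityMeasure.tendsto_iff_forall_lintegral_tendsto.mp hweak φ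
  simpa [φ, ENNReal.coe_min] using h

lemma lintegral_trunc_tendsto (μ : Measure (ℕ × unitInterval))
    {f : ℕ × unitInterval → ℝ≥0} (hf : Continuous f) {c : ℕ → ℝ≥0}
    (hc : Monotone c) (hc' : ∀ t : ℝ≥0, ∃ M, t ≤ c M) :
    Tendsto (fun M => ∫⁻ p, min (f p : ℝ≥0∞) (c M) ∂μ) atTop
      (𝓝 (∫⁻ p, (f p : ℝ≥0∞) ∂μ)) := by
  have hmeas : ∀ M : ℕ, Measurable fun p : ℕ × unitInterval => min ((f p : ℝ≥0∞)) ((c M : ℝ≥0∞)) :=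
    fun M => (hf.measurable.coe_nnreal_ennreal).min measurable_const
  have hmono : Monotone (fun M (p : ℕ × unitInterval) => min ((f p : ℝ≥0∞)) ((c M : ℝ≥0∞))) :=
    fun i j hij p => min_le_min le_rfl (ENNReal.coe_le_coe.mpr (hc hij))
  have key : ∫⁻ p, ⨆ M, min ((f p : ℝ≥0∞)) ((c M : ℝ≥0∞)) ∂μ
      = ⨆ M, ∫⁻ p, min ((f p : ℝ≥0∞)) ((c M : ℝ≥0∞)) ∂μ := lintegral_iSup hmeas hmono
  have hsup : ∀ p : ℕ × unitInterval, (⨆ M, min ((f p : ℝ≥0∞)) ((c M : ℝ≥0∞))) = (f p : ℝ≥0∞) := by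
    intro p
    apply le_antisymm (iSup_le fun M => min_le_left _ _)
    obtain ⟨M, hM⟩ := hc' (f p)
    have hle := le_iSup (fun M => min ((f p : ℝ≥0∞)) ((c M : ℝ≥0∞))) M
    rw [min_eq_left (ENNReal.coe_le_coe.mpr hM)] at hle
    exact hle
  have heq : (∫⁻ p, (f p : ℝ≥0∞) ∂μ) = ⨆ M, ∫⁻ p, min ((f p : ℝ≥0∞)) ((c M : ℝ≥0∞)) ∂μ := by
    rw [← key]
    exact lintegral_congr fun p => (hsup p).symm
  rw [heq]
  exact tendsto_atTop_iSup fun i j hij => lintegral_mono (hmono hij)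

lemma aux_trunc (C K M fx gx : ℝ≥0) (hK : 1 ≤ K) (hM : 1 ≤ M) (h : fx ≤ C + K * gx) :
    fx ≤ min fx (C + 2*K*M) + (2*C + 2*K) * (gx - min gx M) := by
  rcases le_or_gt gx (2*M) with hg | hg
  · have hle : fx ≤ C + 2*K*M := by
      calc fx ≤ C + K * gx := h
        _ ≤ C + K * (2*M) := add_le_add_right (mul_le_mul_right hg K) C
        _ = C + 2*K*M := by ring
    rw [min_eq_left hle]
    exact le_self_add
  · have hMg : M ≤ gx := le_of_lt (lt_of_le_of_lt (by
      calc M = 1 * M := (one_mul M).symm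
        _ ≤ 2 * M := mul_le_mul_left (by norm_num) M) hg)
    rw [min_eq_right hMg]
    refine le_trans h (le_trans ?_ le_add_self)
    rw [← NNReal.coe_le_coe]
    push_cast [NNReal.coe_sub hMg]
    have hgR : (2:ℝ) * M < gx := by exact_mod_cast hg
    have hMR : (1:ℝ) ≤ M := by exact_mod_cast hM
    have hKR : (1:ℝ) ≤ K := by exact_mod_cast hK
    have hC0 : (0:ℝ) ≤ C := C.coe_nonneg
    have hK0 : (0:ℝ) ≤ K := K.coe_nonneg
    nlinarith [mul_nonneg hC0 (show (0:ℝ) ≤ 2*(gx:ℝ) - 2*M - 1 by nlinarith),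
      mul_nonneg hK0 (show (0:ℝ) ≤ (gx:ℝ) - 2*M by linarith)]

lemma main_conv (π : ℕ → ProbabilityMeasure (ℕ × unitInterval))
    (πl : ProbabilityMeasure (ℕ × unitInterval)) (hweak : Tendsto π atTop (𝓝 πl))
    {f g : ℕ × unitInterval → ℝ≥0} (hf : Continuous f) (hg : Continuous g)
    (C K : ℝ≥0) (hK : 1 ≤ K) (hfg : ∀ p, f p ≤ C + K * g p)
    (hgfin : ∫⁻ p, (g p : ℝ≥0∞) ∂πl.toMeasure < ⊤)
    (hgconv : Tendsto (fun n => ∫⁻ p, (g p : ℝ≥0∞) ∂(π n).toMeasure) atTop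
      (𝓝 (∫⁻ p, (g p : ℝ≥0∞) ∂πl.toMeasure))) :
    (∫⁻ p, (f p : ℝ≥0∞) ∂πl.toMeasure < ⊤) ∧
    Tendsto (fun n => ∫⁻ p, (f p : ℝ≥0∞) ∂(π n).toMeasure) atTop
      (𝓝 (∫⁻ p, (f p : ℝ≥0∞) ∂πl.toMeasure)) := by
  have hgm : Measurable fun p : ℕ × unitInterval => (g p : ℝ≥0∞) :=
    hg.measurable.coe_nnreal_ennreal
  have hfm : Measurable fun p : ℕ × unitInterval => (f p : ℝ≥0∞) :=
    hf.measurable.coe_nnreal_ennreal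
  set G := ∫⁻ p, (g p : ℝ≥0∞) ∂πl.toMeasure with hG
  set L := ∫⁻ p, (f p : ℝ≥0∞) ∂πl.toMeasure with hL
  set F := fun n => ∫⁻ p, (f p : ℝ≥0∞) ∂(π n).toMeasure with hF
  -- finiteness of L
  have hLle : L ≤ (C : ℝ≥0∞) + K * G := by
    calc L ≤ ∫⁻ p, ((C : ℝ≥0∞) + K * g p) ∂πl.toMeasure := by
          apply lintegral_mono
          intro p
          have := ENNReal.coe_le_coe.mpr (hfg p)
          rwa [ENNReal.coe_add, ENNReal.coe_mul] at this
      _ = (C : ℝ≥0∞) + K * G := by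
          rw [lintegral_add_left measurable_const, lintegral_const_mul _ hgm,
            lintegral_const, measure_univ, mul_one]
  have hLfin : L < ⊤ :=
    lt_of_le_of_lt hLle (ENNReal.add_lt_top.mpr ⟨ENNReal.coe_lt_top,
      ENNReal.mul_lt_top ENNReal.coe_lt_top hgfin⟩)
  -- truncation levels
  set c : ℕ → ℝ≥0 := fun M => C + 2*K*M with hc
  have hcmono : Monotone c := by
    intro i j hij
    simp only [hc]
    exact add_le_add_right (mul_le_mul_right (by exact_mod_cast hij) _) C
  have hcunbdd : ∀ t : ℝ≥0, ∃ M, t ≤ c M := by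
    intro t
    obtain ⟨M, hM⟩ := exists_nat_ge t
    refine ⟨M, hM.trans ?_⟩
    simp only [hc]
    calc (M : ℝ≥0) = 1 * M := (one_mul _).symm
      _ ≤ 2*K*M := by
          apply mul_le_mul_left
          calc (1:ℝ≥0) ≤ K := hK
            _ = 1 * K := (one_mul K).symm
            _ ≤ 2*K := mul_le_mul_left (by norm_num) K
      _ ≤ C + 2*K*M := le_add_self
  set D : ℝ≥0∞ := ((2*C + 2*K : ℝ≥0) : ℝ≥0∞) with hD
  set A := fun n (M : ℕ) => ∫⁻ p, min ((f p : ℝ≥0∞)) ((c M : ℝ≥0∞)) ∂(π n).toMeasure with hA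
  set Al := fun (M : ℕ) => ∫⁻ p, min ((f p : ℝ≥0∞)) ((c M : ℝ≥0∞)) ∂πl.toMeasure with hAl
  set Bl := fun (M : ℕ) => ∫⁻ p, min ((g p : ℝ≥0∞)) ((M : ℝ≥0∞)) ∂πl.toMeasure with hBl
  have hBl_le : ∀ M : ℕ, Bl M ≤ (M : ℝ≥0∞) := by
    intro M
    calc Bl M ≤ ∫⁻ _, ((M:ℕ) : ℝ≥0∞) ∂πl.toMeasure := lintegral_mono fun p => min_le_right _ _
      _ = (M : ℝ≥0∞) := by rw [lintegral_const, measure_univ, mul_one]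
  have hBl_ne : ∀ M : ℕ, Bl M ≠ ⊤ := fun M => ((hBl_le M).trans_lt (ENNReal.natCast_lt_top M)).ne
  -- limsup bound for each M ≥ 1
  have hstep : ∀ M : ℕ, 1 ≤ M → limsup F atTop ≤ L + D * (G - Bl M) := by
    intro M hM
    have hpt : ∀ p, (f p : ℝ≥0∞) ≤ min ((f p : ℝ≥0∞)) ((c M : ℝ≥0∞))
        + D * ((g p : ℝ≥0∞) - min ((g p : ℝ≥0∞)) ((M : ℝ≥0∞))) := by
      intro p
      have h0 := aux_trunc C K M (f p) (g p) hK (by exact_mod_cast hM) (hfg p)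
      have h1 := ENNReal.coe_le_coe.mpr h0
      simp only [ENNReal.coe_add, ENNReal.coe_mul, ENNReal.coe_min, ENNReal.coe_sub,
        ENNReal.coe_natCast] at h1
      simpa [hc, hD] using h1
    have hFle : ∀ n, F n ≤ A n M + D * ((∫⁻ p, (g p : ℝ≥0∞) ∂(π n).toMeasure)
        - ∫⁻ p, min ((g p : ℝ≥0∞)) ((M : ℝ≥0∞)) ∂(π n).toMeasure) := by
      intro n
      have hmin_meas : Measurable fun p : ℕ × unitInterval =>
          min ((g p : ℝ≥0∞)) ((M : ℝ≥0∞)) := hgm.min measurable_const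
      have hsub : (∫⁻ p, ((g p : ℝ≥0∞) - min ((g p : ℝ≥0∞)) ((M : ℝ≥0∞))) ∂(π n).toMeasure)
          = (∫⁻ p, (g p : ℝ≥0∞) ∂(π n).toMeasure)
            - ∫⁻ p, min ((g p : ℝ≥0∞)) ((M : ℝ≥0∞)) ∂(π n).toMeasure := by
        apply lintegral_sub hmin_meas
        · refine ne_of_lt (lt_of_le_of_lt ?_ (ENNReal.natCast_lt_top M))
          calc _ ≤ ∫⁻ _, ((M:ℕ) : ℝ≥0∞) ∂(π n).toMeasure :=
                lintegral_mono fun p => min_le_right _ _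
            _ = (M : ℝ≥0∞) := by rw [lintegral_const, measure_univ, mul_one]
        · exact Filter.Eventually.of_forall fun p => min_le_left _ _
      rw [← hsub]
      calc F n ≤ ∫⁻ p, (min ((f p : ℝ≥0∞)) ((c M : ℝ≥0∞))
            + D * ((g p : ℝ≥0∞) - min ((g p : ℝ≥0∞)) ((M : ℝ≥0∞)))) ∂(π n).toMeasure :=
            lintegral_mono hpt
        _ = A n M + D * ∫⁻ p, ((g p : ℝ≥0∞) - min ((g p : ℝ≥0∞)) ((M : ℝ≥0∞))) ∂(π n).toMeasure := by
            rw [lintegral_add_left (hfm.min measurable_const),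
              lintegral_const_mul D (f := fun p => (g p : ℝ≥0∞) - min ((g p : ℝ≥0∞)) ((M : ℝ≥0∞))) (hgm.sub hmin_meas)]
    have hAconv : Tendsto (fun n => A n M) atTop (𝓝 (Al M)) :=
      tendsto_lintegral_min π πl hweak hf (c M)
    have hBconv : Tendsto (fun n => ∫⁻ p, min ((g p : ℝ≥0∞)) ((M : ℝ≥0∞)) ∂(π n).toMeasure)
        atTop (𝓝 (Bl M)) := by
      have := tendsto_lintegral_min π πl hweak hg (M : ℝ≥0)
      simpa using this
    have hRHSconv : Tendsto (fun n => A n M + D * ((∫⁻ p, (g p : ℝ≥0∞) ∂(π n).toMeasure)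
        - ∫⁻ p, min ((g p : ℝ≥0∞)) ((M : ℝ≥0∞)) ∂(π n).toMeasure)) atTop
        (𝓝 (Al M + D * (G - Bl M))) := by
      apply Tendsto.add hAconv
      apply ENNReal.Tendsto.const_mul
      · exact ENNReal.Tendsto.sub hgconv hBconv (Or.inr (hBl_ne M))
      · exact Or.inr (by simp only [hD]; exact ENNReal.coe_ne_top)
    calc limsup F atTop ≤ limsup (fun n => A n M + D * ((∫⁻ p, (g p : ℝ≥0∞) ∂(π n).toMeasure)
          - ∫⁻ p, min ((g p : ℝ≥0∞)) ((M : ℝ≥0∞)) ∂(π n).toMeasure)) atTop :=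
          limsup_le_limsup (Filter.Eventually.of_forall hFle)
      _ = Al M + D * (G - Bl M) := hRHSconv.limsup_eq
      _ ≤ L + D * (G - Bl M) :=
          add_le_add_left (lintegral_mono fun p => min_le_left _ _) _
  -- tail tends to zero
  have hBltendsto : Tendsto Bl atTop (𝓝 G) := by
    have := lintegral_trunc_tendsto πl.toMeasure hg (c := fun M : ℕ => (M : ℝ≥0))
      Nat.mono_cast (fun t => exists_nat_ge t)
    simpa using this
  have htail : Tendsto (fun M => D * (G - Bl M)) atTop (𝓝 0) := by
    have h1 : Tendsto (fun M => G - Bl M) atTop (𝓝 (G - G)) :=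
      ENNReal.Tendsto.sub tendsto_const_nhds hBltendsto (Or.inl hgfin.ne)
    rw [tsub_self] at h1
    have h2 := ENNReal.Tendsto.const_mul (a := D) h1 (Or.inr (by simp only [hD]; exact ENNReal.coe_ne_top))
    simpa using h2
  -- limsup ≤ L
  have hlimsup : limsup F atTop ≤ L := by
    apply ENNReal.le_of_forall_pos_le_add
    intro ε hε _
    have hev := (htail.eventually_lt_const (show (0:ℝ≥0∞) < ε by exact_mod_cast hε)).and
      (eventually_ge_atTop 1)
    obtain ⟨M, hMε, hM1⟩ := hev.exists
    calc limsup F atTop ≤ L + D * (G - Bl M) := hstep M hM1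
      _ ≤ L + ε := add_le_add_right (le_of_lt hMε) L
  -- L ≤ liminf
  have hliminf : L ≤ liminf F atTop := by
    have hAltendsto : Tendsto Al atTop (𝓝 L) :=
      lintegral_trunc_tendsto πl.toMeasure hf hcmono hcunbdd
    apply le_of_tendsto hAltendsto
    apply Filter.Eventually.of_forall
    intro M
    have h1 : liminf (fun n => A n M) atTop ≤ liminf F atTop :=
      liminf_le_liminf (Filter.Eventually.of_forall fun n =>
        lintegral_mono fun p => min_le_left _ _)
    rwa [(tendsto_lintegral_min π πl hweak hf (c M)).liminf_eq] at h1
  exact ⟨hLfin, tendsto_of_le_liminf_of_limsup_le hliminf hlimsup⟩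

lemma nat_pow_le_two_pow_mul_descFactorial (r x : ℕ) (hx : 2*r ≤ x) :
    x^r ≤ 2^r * x.descFactorial r := by
  calc x^r ≤ (2*(x+1-r))^r := Nat.pow_le_pow_left (by omega) r
    _ = 2^r * (x+1-r)^r := Nat.mul_pow 2 _ r
    _ ≤ 2^r * x.descFactorial r :=
        Nat.mul_le_mul_left _ (Nat.pow_sub_le_descFactorial x r)

lemma pt_even (r a b : ℕ) (hre : Even r) (har : a ≤ r) (hab : a ≤ 2*b)
    (x : ℕ) (y : ℝ≥0) (hy : y ≤ 1) :
    (x.descFactorial a : ℝ≥0) * y ^ b ≤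
      (((2*r)^r + 1 : ℕ) : ℝ≥0) + ((2^r : ℕ) : ℝ≥0) * ((x.descFactorial r : ℝ≥0) * y^(r/2)) := by
  have hy0 : (0:ℝ≥0) ≤ y := zero_le
  have hyb : y ^ b ≤ 1 := pow_le_one₀ hy0 hy
  rcases Nat.eq_zero_or_pos r with hr0 | hr1
  · subst hr0
    have ha0 : a = 0 := Nat.le_zero.mp har
    subst ha0
    simp only [Nat.descFactorial_zero, Nat.cast_one, one_mul]
    calc y ^ b ≤ 1 := hyb
      _ ≤ (((2*0)^0 + 1 : ℕ) : ℝ≥0) := by norm_num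
      _ ≤ _ := le_self_add
  rcases Nat.lt_or_ge x (2*r) with hx | hx
  · -- small x
    have h1 : x.descFactorial a ≤ (2*r)^r := by
      calc x.descFactorial a ≤ x ^ a := Nat.descFactorial_le_pow x a
        _ ≤ (2*r) ^ a := Nat.pow_le_pow_left (le_of_lt hx) a
        _ ≤ (2*r) ^ r := Nat.pow_le_pow_right (by omega) har
    calc (x.descFactorial a : ℝ≥0) * y ^ b ≤ (x.descFactorial a : ℝ≥0) * 1 :=
          mul_le_mul_right hyb _
      _ = (x.descFactorial a : ℝ≥0) := mul_one _
      _ ≤ (((2*r)^r : ℕ) : ℝ≥0) := by exact_mod_cast h1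
      _ ≤ (((2*r)^r + 1 : ℕ) : ℝ≥0) := by exact_mod_cast Nat.le_succ _
      _ ≤ _ := le_self_add
  · -- large x
    set X : ℝ≥0 := (x : ℝ≥0) with hX
    have hX1 : (1:ℝ≥0) ≤ X := by
      have h : 1 ≤ x := by omega
      rw [hX]; exact_mod_cast h
    set cc := min b (r/2) with hcc
    have hccb : cc ≤ b := min_le_left _ _
    have hccr : cc ≤ r/2 := min_le_right _ _
    have hacc : a ≤ 2*cc := by
      obtain ⟨k, hk⟩ := hre
      have : r/2 = k := by omega
      omega
    have step1 : (x.descFactorial a : ℝ≥0) * y ^ b ≤ X^a * y^cc := by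
      apply mul_le_mul'
      · rw [hX]; exact_mod_cast Nat.descFactorial_le_pow x a
      · exact pow_le_pow_of_le_one hy0 hy hccb
    have step2 : X^a * y^cc ≤ (X^2 * y)^cc := by
      rw [mul_pow, ← pow_mul]
      exact mul_le_mul_left (pow_le_pow_right₀ hX1 hacc) _
    have step3 : (X^2 * y)^cc ≤ 1 + (X^2 * y)^(r/2) := by
      rcases le_or_gt (X^2 * y) 1 with hZ | hZ
      · calc (X^2*y)^cc ≤ 1^cc := pow_le_pow_left' hZ cc
          _ = 1 := one_pow _
          _ ≤ 1 + (X^2 * y)^(r/2) := le_self_add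
      · calc (X^2*y)^cc ≤ (X^2*y)^(r/2) := pow_le_pow_right₀ (le_of_lt hZ) hccr
          _ ≤ 1 + (X^2*y)^(r/2) := le_add_self
    have hr2 : 2 * (r/2) = r := by
      obtain ⟨k, hk⟩ := hre; omega
    have step4 : (X^2 * y)^(r/2) = X^r * y^(r/2) := by
      rw [mul_pow, ← pow_mul, hr2]
    have step5 : X^r ≤ ((2^r : ℕ) : ℝ≥0) * (x.descFactorial r : ℝ≥0) := by
      have h := nat_pow_le_two_pow_mul_descFactorial r x hx
      rw [hX]; exact_mod_cast h
    calc (x.descFactorial a : ℝ≥0) * y ^ b ≤ (X^2 * y)^cc := step1.trans step2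
      _ ≤ 1 + (X^2 * y)^(r/2) := step3
      _ = 1 + X^r * y^(r/2) := by rw [step4]
      _ ≤ 1 + (((2^r : ℕ) : ℝ≥0) * (x.descFactorial r : ℝ≥0)) * y^(r/2) :=
          add_le_add_right (mul_le_mul_left step5 _) 1
      _ = 1 + ((2^r : ℕ) : ℝ≥0) * ((x.descFactorial r : ℝ≥0) * y^(r/2)) := by ring
      _ ≤ _ := by
          apply add_le_add_left
          have : (1:ℕ) ≤ (2*r)^r + 1 := by omega
          exact_mod_cast this

lemma key_conv (r : ℕ)
    (π : ℕ → ProbabilityMeasure (ℕ × unitInterval)) (πl : ProbabilityMeasure (ℕ × unitInterval))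
    (hweak : Tendsto π atTop (𝓝 πl))
    (heven : Even r →
      mom πl.toMeasure r (r / 2) < ⊤ ∧
      Tendsto (fun n => mom (π n).toMeasure r (r / 2)) atTop (𝓝 (mom πl.toMeasure r (r / 2))))
    (hodd : Odd r →
      (mom πl.toMeasure (r - 1) ((r - 1) / 2) < ⊤ ∧
        Tendsto (fun n => mom (π n).toMeasure (r - 1) ((r - 1) / 2)) atTop
          (𝓝 (mom πl.toMeasure (r - 1) ((r - 1) / 2)))) ∧
      (mom πl.toMeasure r ((r + 1) / 2) < ⊤ ∧
        Tendsto (fun n => mom (π n).toMeasure r ((r + 1) / 2)) atTop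
          (𝓝 (mom πl.toMeasure r ((r + 1) / 2)))))
    (a b : ℕ) (har : a ≤ r) (hab : a ≤ 2*b) :
    mom πl.toMeasure a b < ⊤ ∧
      Tendsto (fun n => mom (π n).toMeasure a b) atTop (𝓝 (mom πl.toMeasure a b)) := by
  have hK1 : (1:ℝ≥0) ≤ ((2^r : ℕ) : ℝ≥0) := by exact_mod_cast Nat.one_le_two_pow
  rcases Nat.even_or_odd r with hre | hro
  · obtain ⟨h1, h2⟩ := heven hre
    rw [mom_eq] at h1
    simp only [mom_eq] at h2 ⊢
    refine main_conv π πl hweak (momfun_continuous a b) (momfun_continuous r (r/2))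
      (((2*r)^r + 1 : ℕ) : ℝ≥0) ((2^r : ℕ) : ℝ≥0) hK1 ?_ h1 h2
    intro p
    exact pt_even r a b hre har hab p.1 (yNN p) (yNN_le_one p)
  · obtain ⟨⟨h1a, h1b⟩, h2a, h2b⟩ := hodd hro
    rw [mom_eq] at h1a h2a
    simp only [mom_eq] at h1b h2b ⊢
    set g : ℕ × unitInterval → ℝ≥0 :=
      fun p => momfun (r-1) ((r-1)/2) p + momfun r ((r+1)/2) p with hgdef
    have hgc : Continuous g := (momfun_continuous _ _).add (momfun_continuous _ _)
    have hsplit : ∀ μ : Measure (ℕ × unitInterval), ∫⁻ p, (g p : ℝ≥0∞) ∂μ =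
        (∫⁻ p, (momfun (r-1) ((r-1)/2) p : ℝ≥0∞) ∂μ)
          + ∫⁻ p, (momfun r ((r+1)/2) p : ℝ≥0∞) ∂μ := by
      intro μ
      rw [← lintegral_add_left
        ((momfun_continuous (r-1) ((r-1)/2)).measurable.coe_nnreal_ennreal)]
      exact lintegral_congr fun p => by simp [hgdef]
    have hgfin : ∫⁻ p, (g p : ℝ≥0∞) ∂πl.toMeasure < ⊤ := by
      rw [hsplit]
      exact ENNReal.add_lt_top.mpr ⟨h1a, h2a⟩
    have hgconv : Tendsto (fun n => ∫⁻ p, (g p : ℝ≥0∞) ∂(π n).toMeasure) atTop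
        (𝓝 (∫⁻ p, (g p : ℝ≥0∞) ∂πl.toMeasure)) := by
      simp only [hsplit]
      exact Tendsto.add h1b h2b
    refine main_conv π πl hweak (momfun_continuous a b) hgc
      (((2*r)^r + 1 : ℕ) : ℝ≥0) ((2^r : ℕ) : ℝ≥0) hK1 ?_ hgfin hgconv
    intro p
    by_cases ha : a = r
    · subst ha
      have hb : (a+1)/2 ≤ b := by obtain ⟨k, hk⟩ := hro; omega
      calc momfun a b p ≤ momfun a ((a+1)/2) p :=
            mul_le_mul_right (pow_le_pow_of_le_one zero_le (yNN_le_one p) hb) _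
        _ ≤ g p := le_add_self
        _ ≤ ((2^a : ℕ) : ℝ≥0) * g p := le_mul_of_one_le_left zero_le hK1
        _ ≤ _ := le_add_self
    · have har' : a ≤ r - 1 := by omega
      have hro' := hro
      obtain ⟨k, hk⟩ := hro'
      have hre' : Even (r-1) := ⟨k, by omega⟩
      have h := pt_even (r-1) a b hre' har' hab p.1 (yNN p) (yNN_le_one p)
      refine le_trans h ?_
      apply add_le_add
      · have hC : ((2*(r-1))^(r-1) + 1 : ℕ) ≤ ((2*r)^r + 1 : ℕ) := by
          have h1 := Nat.pow_le_pow_left (show 2*(r-1) ≤ 2*r by omega) (r-1)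
          have h2 := Nat.pow_le_pow_right (show 1 ≤ 2*r by omega) (show r-1 ≤ r by omega)
          omega
        exact_mod_cast hC
      · have hKle : ((2^(r-1) : ℕ) : ℝ≥0) ≤ ((2^r : ℕ) : ℝ≥0) := by
          exact_mod_cast Nat.pow_le_pow_right (by norm_num) (show r-1 ≤ r by omega)
        calc ((2^(r-1) : ℕ) : ℝ≥0) * momfun (r-1) ((r-1)/2) p
            ≤ ((2^r : ℕ) : ℝ≥0) * momfun (r-1) ((r-1)/2) p := mul_le_mul_left hKle _
          _ ≤ ((2^r : ℕ) : ℝ≥0) * g p := mul_le_mul_right le_self_add _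

lemma nodeCount_le_card {V : Type*} [Fintype V] [DecidableEq V] (E : Finset (Sym2 V)) :
    nodeCount E ≤ Fintype.card V := by
  unfold nodeCount
  exact (Finset.card_filter_le _ _).trans (by simp)

lemma nodeCount_le_two_mul_card {V : Type*} [Fintype V] [DecidableEq V] (E : Finset (Sym2 V)) :
    nodeCount E ≤ 2 * E.card := by
  classical
  unfold nodeCount
  have hsub : Finset.univ.filter (fun v => ∃ e ∈ E, v ∈ e) ⊆
      E.biUnion (fun e => Finset.univ.filter (· ∈ e)) := by
    intro v hv
    simp only [Finset.mem_filter, Finset.mem_univ, true_and] at hv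
    obtain ⟨e, he, hve⟩ := hv
    simp only [Finset.mem_biUnion]
    exact ⟨e, he, by simp [hve]⟩
  have hcard2 : ∀ e : Sym2 V, (Finset.univ.filter (· ∈ e)).card ≤ 2 := by
    intro e
    induction e with
    | _ u v =>
      have : Finset.univ.filter (· ∈ s(u, v)) ⊆ {u, v} := by
        intro x hx
        simp only [Finset.mem_filter, Finset.mem_univ, true_and, Sym2.mem_iff] at hx
        simpa [Finset.mem_insert, Finset.mem_singleton] using hx
      exact (Finset.card_le_card this).trans (Finset.card_insert_le _ _ |>.trans (by simp))
  calc (Finset.univ.filter (fun v => ∃ e ∈ E, v ∈ e)).card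
      ≤ (E.biUnion (fun e => Finset.univ.filter (· ∈ e))).card := Finset.card_le_card hsub
    _ ≤ ∑ e ∈ E, (Finset.univ.filter (· ∈ e)).card := Finset.card_biUnion_le
    _ ≤ ∑ _e ∈ E, 2 := Finset.sum_le_sum fun e _ => hcard2 e
    _ = 2 * E.card := by rw [Finset.sum_const, smul_eq_mul, mul_comm]

/-- Let `r ≥ 2` and let `πₙ` and `π` be Borel probability measures on
`ℕ × [0,1]` with `πₙ → π` weakly. Assume: if `r` is even, `(πₙ)_{r,r/2} → (π)_{r,r/2} < ∞`;
and if `r` is odd, `(πₙ)_{r−1,(r−1)/2} → (π)_{r−1,(r−1)/2} < ∞` and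
`(πₙ)_{r,(r+1)/2} → (π)_{r,(r+1)/2} < ∞`. Then for every nonempty `E ⊆ E(K_r)`,
`(π)_{‖E‖,|E|} < ∞` and `(πₙ)_{‖E‖,|E|} → (π)_{‖E‖,|E|}`; in particular
`(πₙ)_{r,r(r−1)/2} → (π)_{r,r(r−1)/2}` and `(πₙ)_{r,r} → (π)_{r,r}`. -/
theorem moments_converge_for_complete_graph_subsets (r : ℕ) (hr : 2 ≤ r)
    (π : ℕ → ProbabilityMeasure (ℕ × unitInterval)) (πl : ProbabilityMeasure (ℕ × unitInterval))
    (hweak : Tendsto π atTop (𝓝 πl))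
    (heven : Even r →
      mom πl.toMeasure r (r / 2) < ⊤ ∧
      Tendsto (fun n => mom (π n).toMeasure r (r / 2)) atTop (𝓝 (mom πl.toMeasure r (r / 2))))
    (hodd : Odd r →
      (mom πl.toMeasure (r - 1) ((r - 1) / 2) < ⊤ ∧
        Tendsto (fun n => mom (π n).toMeasure (r - 1) ((r - 1) / 2)) atTop
          (𝓝 (mom πl.toMeasure (r - 1) ((r - 1) / 2)))) ∧
      (mom πl.toMeasure r ((r + 1) / 2) < ⊤ ∧
        Tendsto (fun n => mom (π n).toMeasure r ((r + 1) / 2)) atTop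
          (𝓝 (mom πl.toMeasure r ((r + 1) / 2))))) :
    (∀ E ∈ (⊤ : SimpleGraph (Fin r)).edgeFinset.powerset, E.Nonempty →
      mom πl.toMeasure (nodeCount E) E.card < ⊤ ∧
      Tendsto (fun n => mom (π n).toMeasure (nodeCount E) E.card) atTop
        (𝓝 (mom πl.toMeasure (nodeCount E) E.card))) ∧
    Tendsto (fun n => mom (π n).toMeasure r (r * (r - 1) / 2)) atTop
      (𝓝 (mom πl.toMeasure r (r * (r - 1) / 2))) ∧
    Tendsto (fun n => mom (π n).toMeasure r r) atTop (𝓝 (mom πl.toMeasure r r)) := by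
  have keyc := key_conv r π πl hweak heven hodd
  refine ⟨?_, ?_, ?_⟩
  · intro E _hE _hEne
    exact keyc (nodeCount E) E.card
      ((nodeCount_le_card E).trans_eq (Fintype.card_fin r))
      (nodeCount_le_two_mul_card E)
  · have h2 : 2 ∣ r * (r-1) := by
      rcases Nat.even_or_odd r with h | h
      · exact Dvd.dvd.mul_right (even_iff_two_dvd.mp h) _
      · have he : Even (r-1) := Nat.Odd.sub_odd h odd_one
        exact Dvd.dvd.mul_left (even_iff_two_dvd.mp he) _
    have hb : r ≤ 2 * (r * (r-1) / 2) := by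
      rw [Nat.mul_div_cancel' h2]
      calc r = r * 1 := (mul_one r).symm
        _ ≤ r * (r-1) := Nat.mul_le_mul_left r (by omega)
    exact (keyc r (r*(r-1)/2) le_rfl hb).2
  · exact (keyc r r le_rfl (by omega)).2
end
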